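/- Let u : ℝⁿ × (0,T) → ℝ be a smooth positive solution of the heat equation ∂ₜu = Δu on Euclidean space, let f = −log u − (n/2) log(4πt), w = 2Δ(−log u) − |∇ log u|², and w_n = t w + f − n. Then (∂ₜ − Δ) w_n = −2t ‖∇² f − g/(2t)‖²_{HS} − 2⟨∇ w_n, ∇ f⟩, where g is the Euclidean metric (so ‖g‖²_{HS} = n and Tr(∇²f · g) = Δf). -/

import Mathlib

open Real Set

/-- Partial derivative in the `i`-th coordinate direction of Euclidean space. -/
noncomputable def pd {n : ℕ} (f : EuclideanSpace ℝ (Fin n) → ℝ) (i : Fin n)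
    (x : EuclideanSpace ℝ (Fin n)) : ℝ :=
  fderiv ℝ f x (EuclideanSpace.single i 1)

/-- Euclidean Laplacian: trace of the Hessian. -/
noncomputable def lap {n : ℕ} (f : EuclideanSpace ℝ (Fin n) → ℝ)
    (x : EuclideanSpace ℝ (Fin n)) : ℝ :=
  ∑ i, pd (pd f i) i x

/-- Squared norm of the gradient. -/
noncomputable def gradsq {n : ℕ} (f : EuclideanSpace ℝ (Fin n) → ℝ)
    (x : EuclideanSpace ℝ (Fin n)) : ℝ :=
  ∑ i, (pd f i x) ^ 2

/-- Inner product of two gradients. -/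
noncomputable def gradInner {n : ℕ} (f g : EuclideanSpace ℝ (Fin n) → ℝ)
    (x : EuclideanSpace ℝ (Fin n)) : ℝ :=
  ∑ i, pd f i x * pd g i x

/-- Squared Hilbert–Schmidt norm of `∇²f − g/(2t)` (flat metric `g = δ_{ij}`). -/
noncomputable def hessShiftSq {n : ℕ} (f : EuclideanSpace ℝ (Fin n) → ℝ)
    (t : ℝ) (x : EuclideanSpace ℝ (Fin n)) : ℝ :=
  ∑ i, ∑ j, (pd (pd f j) i x - (if i = j then 1 / (2 * t) else 0)) ^ 2

section NiAux

variable {n : ℕ}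
local notation "E" => EuclideanSpace ℝ (Fin n)

/-- Directional derivative of a function on space-time. -/
noncomputable def dd (v : ℝ × E) (g : ℝ × E → ℝ) (p : ℝ × E) : ℝ := fderiv ℝ g p v

/-- Spatial coordinate direction. -/
noncomputable def vi (i : Fin n) : ℝ × E := (0, EuclideanSpace.single i 1)

/-- Time direction. -/
noncomputable def v0 : ℝ × E := ((1 : ℝ), (0 : E))

theorem dd_smooth {g : ℝ × E → ℝ} (hg : ContDiff ℝ (⊤ : ℕ∞) g) (v : ℝ × E) :
    ContDiff ℝ (⊤ : ℕ∞) (dd v g) :=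
  (hg.fderiv_right (m := (⊤ : ℕ∞)) le_rfl).clm_apply (contDiff_const (c := v))

theorem slice_smooth_x {g : ℝ × E → ℝ} (hg : ContDiff ℝ (⊤ : ℕ∞) g) (t : ℝ) :
    ContDiff ℝ (⊤ : ℕ∞) (fun y : E => g (t, y)) :=
  hg.comp (contDiff_const.prodMk contDiff_id)

theorem slice_smooth_t {g : ℝ × E → ℝ} (hg : ContDiff ℝ (⊤ : ℕ∞) g) (x : E) :
    ContDiff ℝ (⊤ : ℕ∞) (fun s : ℝ => g (s, x)) :=
  hg.comp (contDiff_id.prodMk contDiff_const)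

theorem pd_slice {g : ℝ × E → ℝ} (hg : ContDiff ℝ (⊤ : ℕ∞) g) (t : ℝ) (i : Fin n) (x : E) :
    pd (fun y : E => g (t, y)) i x = dd (vi i) g (t, x) := by
  have hL : HasFDerivAt (fun y : E => ((t, y) : ℝ × E))
      (((0 : E →L[ℝ] ℝ)).prod (ContinuousLinearMap.id ℝ E)) x :=
    (hasFDerivAt_const t x).prodMk (hasFDerivAt_id x)
  have hgd : HasFDerivAt g (fderiv ℝ g (t, x)) (t, x) :=
    (hg.differentiable (by simp)).differentiableAt.hasFDerivAt
  have h : HasFDerivAt (fun y : E => g (t, y))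
      ((fderiv ℝ g (t, x)).comp (((0 : E →L[ℝ] ℝ)).prod (ContinuousLinearMap.id ℝ E))) x :=
    hgd.comp x hL
  rw [pd, h.fderiv]
  rfl

theorem deriv_slice {g : ℝ × E → ℝ} (hg : ContDiff ℝ (⊤ : ℕ∞) g) (t : ℝ) (x : E) :
    deriv (fun s : ℝ => g (s, x)) t = dd v0 g (t, x) := by
  have hL : HasFDerivAt (fun s : ℝ => ((s, x) : ℝ × E))
      ((ContinuousLinearMap.id ℝ ℝ).prod (0 : ℝ →L[ℝ] E)) t :=
    (hasFDerivAt_id t).prodMk (hasFDerivAt_const x t)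
  have hgd : HasFDerivAt g (fderiv ℝ g (t, x)) (t, x) :=
    (hg.differentiable (by simp)).differentiableAt.hasFDerivAt
  have h : HasFDerivAt (fun s : ℝ => g (s, x))
      ((fderiv ℝ g (t, x)).comp ((ContinuousLinearMap.id ℝ ℝ).prod (0 : ℝ →L[ℝ] E))) t :=
    hgd.comp t hL
  rw [h.hasDerivAt.deriv]
  rfl

theorem hasDerivAt_slice {g : ℝ × E → ℝ} (hg : ContDiff ℝ (⊤ : ℕ∞) g) (x : E) (t : ℝ) :
    HasDerivAt (fun s : ℝ => g (s, x)) (dd v0 g (t, x)) t := by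
  have hd : DifferentiableAt ℝ (fun s : ℝ => g (s, x)) t :=
    ((slice_smooth_t hg x).differentiable (by simp)) t
  have h := hd.hasDerivAt
  rwa [deriv_slice hg t x] at h

theorem dd_comm {g : ℝ × E → ℝ} (hg : ContDiff ℝ (⊤ : ℕ∞) g) (v w : ℝ × E) (p : ℝ × E) :
    dd v (dd w g) p = dd w (dd v g) p := by
  have hdg : Differentiable ℝ (fderiv ℝ g) :=
    (hg.fderiv_right (m := (⊤ : ℕ∞)) le_rfl).differentiable (by simp)
  have key : ∀ (z : ℝ × E) (q : ℝ × E),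
      fderiv ℝ (dd z g) q = (fderiv ℝ (fderiv ℝ g) q).flip z := by
    intro z q
    have h1 : HasFDerivAt (fun r => (ContinuousLinearMap.apply ℝ ℝ z) (fderiv ℝ g r))
        ((ContinuousLinearMap.apply ℝ ℝ z).comp (fderiv ℝ (fderiv ℝ g) q)) q :=
      (ContinuousLinearMap.apply ℝ ℝ z).hasFDerivAt.comp q (hdg q).hasFDerivAt
    have h2 : fderiv ℝ (dd z g) q
        = (ContinuousLinearMap.apply ℝ ℝ z).comp (fderiv ℝ (fderiv ℝ g) q) := h1.fderiv
    rw [h2]; ext y <;> rfl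
  have hsym := second_derivative_symmetric (𝕜 := ℝ) (f := g) (f' := fderiv ℝ g)
      (f'' := fderiv ℝ (fderiv ℝ g) p)
      (fun y => ((hg.differentiable (by simp)) y).hasFDerivAt) (hdg p).hasFDerivAt v w
  show fderiv ℝ (dd w g) p v = fderiv ℝ (dd v g) p w
  rw [key w p, key v p]
  simpa using hsym

theorem dd_add {g h : ℝ × E → ℝ} (hg : Differentiable ℝ g) (hh : Differentiable ℝ h)
    (v p) : dd v (fun q => g q + h q) p = dd v g p + dd v h p := by
  unfold dd; rw [fderiv_fun_add (hg p) (hh p)]; rfl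

theorem dd_sub {g h : ℝ × E → ℝ} (hg : Differentiable ℝ g) (hh : Differentiable ℝ h)
    (v p) : dd v (fun q => g q - h q) p = dd v g p - dd v h p := by
  unfold dd; rw [fderiv_fun_sub (hg p) (hh p)]; rfl

theorem dd_const (c : ℝ) (v p) : dd v (fun _ : ℝ × E => c) p = 0 := by
  unfold dd; rw [fderiv_fun_const]; rfl

theorem dd_neg {g : ℝ × E → ℝ} (v p) : dd v (fun q => -g q) p = -dd v g p := by
  unfold dd; rw [fderiv_fun_neg]; rfl

theorem dd_const_mul {g : ℝ × E → ℝ} (hg : Differentiable ℝ g) (c : ℝ) (v p) :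
    dd v (fun q => c * g q) p = c * dd v g p := by
  unfold dd; rw [fderiv_const_mul (hg p)]; rfl

theorem dd_mul {g h : ℝ × E → ℝ} (hg : Differentiable ℝ g) (hh : Differentiable ℝ h)
    (v p) : dd v (fun q => g q * h q) p = dd v g p * h p + g p * dd v h p := by
  unfold dd; rw [fderiv_fun_mul (hg p) (hh p)]; simp; ring

theorem dd_sq {g : ℝ × E → ℝ} (hg : Differentiable ℝ g) (v p) :
    dd v (fun q => g q ^ 2) p = 2 * g p * dd v g p := by
  have h : (fun q => g q ^ 2) = fun q => g q * g q := by ext q; ring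
  rw [h, dd_mul hg hg]; ring

theorem dd_sum {ι : Type*} (s : Finset ι) {g : ι → ℝ × E → ℝ}
    (hg : ∀ j, Differentiable ℝ (g j)) (v p) :
    dd v (fun q => ∑ j ∈ s, g j q) p = ∑ j ∈ s, dd v (g j) p := by
  unfold dd
  rw [fderiv_fun_sum (fun j _ => (hg j p))]
  simp

theorem dd_log {g : ℝ × E → ℝ} (hg : Differentiable ℝ g) (hne : ∀ q, g q ≠ 0) (v p) :
    dd v (fun q => Real.log (g q)) p = dd v g p / g p := by
  unfold dd
  rw [((hg p).hasFDerivAt.log (hne p)).fderiv]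
  simp [div_eq_inv_mul]

theorem dd_inv {g : ℝ × E → ℝ} (hg : Differentiable ℝ g) (hne : ∀ q, g q ≠ 0) (v p) :
    dd v (fun q => (g q)⁻¹) p = -(dd v g p / g p ^ 2) := by
  have hinv : HasFDerivAt (fun x : ℝ => x⁻¹)
      (ContinuousLinearMap.smulRight (1 : ℝ →L[ℝ] ℝ) (-((g p) ^ 2)⁻¹)) (g p) :=
    (hasDerivAt_inv (hne p)).hasFDerivAt
  have h : HasFDerivAt (fun q => (g q)⁻¹)
      ((ContinuousLinearMap.smulRight (1 : ℝ →L[ℝ] ℝ) (-((g p) ^ 2)⁻¹)).comp (fderiv ℝ g p)) p :=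
    hinv.comp p (hg p).hasFDerivAt
  unfold dd
  rw [h.fderiv]
  simp [div_eq_mul_inv]

theorem dd_div {g h : ℝ × E → ℝ} (hg : Differentiable ℝ g) (hh : Differentiable ℝ h)
    (hne : ∀ q, h q ≠ 0) (v p) :
    dd v (fun q => g q / h q) p = (dd v g p * h p - g p * dd v h p) / h p ^ 2 := by
  have e : (fun q => g q / h q) = fun q => g q * (h q)⁻¹ := by ext q; rw [div_eq_mul_inv]
  rw [e, dd_mul (h := fun q => (h q)⁻¹) hg (fun q => (hh q).inv (hne q)), dd_inv hh hne]
  have h0 := hne p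
  field_simp
  ring

theorem dd_congr_open {g h : ℝ × E → ℝ} {S : Set (ℝ × E)} (hS : IsOpen S)
    (heq : ∀ q ∈ S, g q = h q) {p} (hp : p ∈ S) (v) : dd v g p = dd v h p := by
  unfold dd
  rw [Filter.EventuallyEq.fderiv_eq (Filter.eventuallyEq_of_mem (hS.mem_nhds hp) heq)]

theorem lap_slice {g : ℝ × E → ℝ} (hg : ContDiff ℝ (⊤ : ℕ∞) g) (t : ℝ) (x : E) :
    lap (fun y : E => g (t, y)) x = ∑ i, dd (vi i) (dd (vi i) g) (t, x) := by
  unfold lap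
  refine Finset.sum_congr rfl fun i _ => ?_
  have h1 : pd (fun y : E => g (t, y)) i = fun x' => dd (vi i) g (t, x') :=
    funext fun x' => pd_slice hg t i x'
  rw [h1, pd_slice (dd_smooth hg _) t i x]

theorem gradsq_slice {g : ℝ × E → ℝ} (hg : ContDiff ℝ (⊤ : ℕ∞) g) (t : ℝ) (x : E) :
    gradsq (fun y : E => g (t, y)) x = ∑ i, (dd (vi i) g (t, x)) ^ 2 := by
  unfold gradsq
  exact Finset.sum_congr rfl fun i _ => by rw [pd_slice hg t i x]

end NiAux

private lemma pullc {ι : Type*} (s : Finset ι) (c : ℝ) (f : ι → ℝ) :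
    ∑ x ∈ s, c * f x = c * ∑ x ∈ s, f x := by rw [Finset.mul_sum]
theorem final_algebra {n : ℕ} (t : ℝ) (ht : t ≠ 0) (a : Fin n → ℝ) (b : Fin n → Fin n → ℝ)
    (c : Fin n → Fin n → Fin n → ℝ) (q : Fin n → Fin n → ℝ)
    (hcsym : ∀ i j, c i j j = c j j i) :
    ((2 * ∑ i, b i i - ∑ i, (a i) ^ 2)
      + t * (2 * ∑ i, (∑ j, q i j - ∑ j, (2 * (b i j) ^ 2 + 2 * a j * c i i j))
             - ∑ i, 2 * a i * (∑ j, c i j j - ∑ j, 2 * a j * b i j))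
      + ((∑ i, b i i - ∑ i, (a i) ^ 2) - (n : ℝ) / 2 * (1 / t)))
    - (∑ i, (t * (2 * (∑ j, q i j) - ∑ j, 2 * ((b i j) ^ 2 + a j * c i i j)) + b i i))
    = -2 * t * (∑ i, ∑ j, (b i j - (if i = j then 1 / (2 * t) else 0)) ^ 2)
      - 2 * ∑ i, (t * (2 * ∑ j, c i j j - ∑ j, 2 * a j * b i j) + a i) * a i := by
  -- atoms
  set X := ∑ i, ∑ j, q i j with hX
  set Y := ∑ i, ∑ j, (b i j) ^ 2 with hY
  set Z := ∑ i, ∑ j, a j * c i i j with hZ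
  set Z' := ∑ i, ∑ j, a i * c i j j with hZ'
  set W := ∑ i, ∑ j, a i * (a j * b i j) with hW
  set S1 := ∑ i, b i i with hS1
  set S2 := ∑ i, (a i) ^ 2 with hS2
  have hZZ : Z' = Z := by
    rw [hZ', hZ]
    rw [Finset.sum_congr rfl fun i _ => Finset.sum_congr rfl fun j _ =>
      (by rw [hcsym i j] : a i * c i j j = a i * c j j i)]
    rw [Finset.sum_comm]
  have hhess : ∑ i, ∑ j, (b i j - (if i = j then 1 / (2 * t) else 0)) ^ 2
      = Y - S1 / t + n / (4 * t ^ 2) := by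
    have step : ∀ i : Fin n, ∑ j, (b i j - (if i = j then 1 / (2 * t) else 0)) ^ 2
        = ∑ j, (b i j) ^ 2 - b i i / t + 1 / (4 * t ^ 2) := by
      intro i
      have e : ∀ j : Fin n, (b i j - (if i = j then 1 / (2 * t) else 0)) ^ 2
          = (b i j) ^ 2 - (if i = j then b i j / t - 1 / (4 * t ^ 2) else 0) := by
        intro j
        by_cases h : i = j
        · subst h; simp only [if_pos rfl, ↓reduceIte]; field_simp; ring
        · simp [h]
      rw [Finset.sum_congr rfl fun j _ => e j, Finset.sum_sub_distrib, Finset.sum_ite_eq]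
      simp
      ring
    rw [Finset.sum_congr rfl fun i _ => step i, Finset.sum_add_distrib,
      Finset.sum_sub_distrib, ← Finset.sum_div, Finset.sum_const, Finset.card_univ,
      Fintype.card_fin, nsmul_eq_mul, hY, hS1]
    ring
  have exp1 : ∑ i, (∑ j, q i j - ∑ j, (2 * (b i j) ^ 2 + 2 * a j * c i i j))
      = X - (2 * Y + 2 * Z) := by
    have inner : ∀ i : Fin n, ∑ j, (2 * (b i j) ^ 2 + 2 * a j * c i i j)
        = 2 * (∑ j, (b i j) ^ 2) + 2 * ∑ j, a j * c i i j := by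
      intro i
      rw [Finset.sum_add_distrib, pullc]
      congr 1
      rw [Finset.sum_congr rfl fun j _ => (by ring : 2 * a j * c i i j = 2 * (a j * c i i j)),
        pullc]
    rw [Finset.sum_congr rfl fun i _ => by rw [inner i], Finset.sum_sub_distrib,
      Finset.sum_add_distrib, pullc, pullc, hX, hY, hZ]
  have exp2 : ∑ i, 2 * a i * (∑ j, c i j j - ∑ j, 2 * a j * b i j)
      = 2 * Z' - 4 * W := by
    have inner : ∀ i : Fin n, 2 * a i * (∑ j, c i j j - ∑ j, 2 * a j * b i j)
        = 2 * (∑ j, a i * c i j j) - 4 * ∑ j, a i * (a j * b i j) := by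
      intro i
      have h1 : ∑ j, a i * c i j j = a i * ∑ j, c i j j := pullc _ _ _
      have h2 : ∑ j, a i * (a j * b i j) = a i * ∑ j, a j * b i j := pullc _ _ _
      have h3 : ∑ j, 2 * a j * b i j = 2 * ∑ j, a j * b i j := by
        rw [Finset.sum_congr rfl fun j _ =>
          (by ring : 2 * a j * b i j = 2 * (a j * b i j)), pullc]
      rw [h1, h2, h3]; ring
    rw [Finset.sum_congr rfl fun i _ => inner i, Finset.sum_sub_distrib, pullc, pullc,
      hZ', hW]
  have exp3 : ∑ i, (t * (2 * (∑ j, q i j) - ∑ j, 2 * ((b i j) ^ 2 + a j * c i i j)) + b i i)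
      = t * (2 * X - (2 * Y + 2 * Z)) + S1 := by
    have inner : ∀ i : Fin n, t * (2 * (∑ j, q i j) - ∑ j, 2 * ((b i j) ^ 2 + a j * c i i j))
        = t * (2 * ∑ j, q i j) - t * (2 * ∑ j, (b i j) ^ 2 + 2 * ∑ j, a j * c i i j) := by
      intro i
      have : ∑ j, 2 * ((b i j) ^ 2 + a j * c i i j)
          = 2 * ∑ j, (b i j) ^ 2 + 2 * ∑ j, a j * c i i j := by
        rw [pullc, Finset.sum_add_distrib]; ring
      rw [this]; ring
    rw [Finset.sum_add_distrib, Finset.sum_congr rfl fun i _ => inner i,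
      Finset.sum_sub_distrib, ← hS1]
    congr 1
    rw [Finset.sum_congr rfl (fun i _ => (by ring : t * (2 * ∑ j, q i j) = (2*t) * ∑ j, q i j)),
      pullc]
    rw [Finset.sum_congr rfl (fun i _ =>
      (by ring : t * (2 * ∑ j, (b i j) ^ 2 + 2 * ∑ j, a j * c i i j)
        = (2*t) * ∑ j, (b i j) ^ 2 + (2*t) * ∑ j, a j * c i i j)),
      Finset.sum_add_distrib, pullc, pullc, hX, hY, hZ]
    ring
  have exp4 : ∑ i, (t * (2 * ∑ j, c i j j - ∑ j, 2 * a j * b i j) + a i) * a i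
      = t * (2 * Z' - 2 * W) + S2 := by
    have inner : ∀ i : Fin n, (t * (2 * ∑ j, c i j j - ∑ j, 2 * a j * b i j) + a i) * a i
        = (2*t) * (∑ j, a i * c i j j) - (2*t) * (∑ j, a i * (a j * b i j)) + (a i) ^ 2 := by
      intro i
      have h1 : ∑ j, a i * c i j j = a i * ∑ j, c i j j := pullc _ _ _
      have h2 : ∑ j, a i * (a j * b i j) = a i * ∑ j, a j * b i j := pullc _ _ _
      have h3 : ∑ j, 2 * a j * b i j = 2 * ∑ j, a j * b i j := by
        rw [Finset.sum_congr rfl fun j _ =>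
          (by ring : 2 * a j * b i j = 2 * (a j * b i j)), pullc]
      rw [h1, h2, h3]; ring
    rw [Finset.sum_congr rfl fun i _ => inner i, Finset.sum_add_distrib,
      Finset.sum_sub_distrib, pullc, pullc, hZ', hW, ← hS2]
    ring
  rw [hhess, exp1, exp2, exp3, exp4, hZZ]
  field_simp
  try ring
  try tauto
/-- evolution of the Perelman–Ni Harnack quantity, flat case: for a
smooth positive solution `u` of the heat equation on `ℝⁿ`, with `f̄ = −log u`,
`f = f̄ − (n/2)log(4πt)`, `w = 2Δf̄ − |∇f̄|²` and `w_n = tw + f − n`, one has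
`(∂ₜ − Δ)w_n = −2t‖∇²f − g/(2t)‖² − 2⟨∇w_n, ∇f⟩`. -/
theorem ni_harnack_evolution {n : ℕ} (T : ℝ)
    (u : ℝ → EuclideanSpace ℝ (Fin n) → ℝ)
    (hsmooth : ContDiff ℝ (⊤ : ℕ∞) (fun p : ℝ × EuclideanSpace ℝ (Fin n) => u p.1 p.2))
    (hpos : ∀ t x, 0 < u t x)
    (hheat : ∀ t ∈ Ioo (0:ℝ) T, ∀ x, deriv (fun s => u s x) t = lap (u t) x) :
    ∀ t ∈ Ioo (0:ℝ) T, ∀ x,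
      deriv (fun s =>
          s * (2 * lap (fun y => -Real.log (u s y)) x
                - gradsq (fun y => -Real.log (u s y)) x)
            + (-Real.log (u s x) - (n / 2) * Real.log (4 * Real.pi * s)) - n) t
        - lap (fun y =>
            t * (2 * lap (fun z => -Real.log (u t z)) y
                  - gradsq (fun z => -Real.log (u t z)) y)
              + (-Real.log (u t y) - (n / 2) * Real.log (4 * Real.pi * t)) - n) x
      = -2 * t * hessShiftSq (fun y => -Real.log (u t y)) t x
          - 2 * gradInner
              (fun y =>
                t * (2 * lap (fun z => -Real.log (u t z)) y
                      - gradsq (fun z => -Real.log (u t z)) y)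
                  + (-Real.log (u t y) - (n / 2) * Real.log (4 * Real.pi * t)) - n)
              (fun y => -Real.log (u t y)) x := by
  intro t ht x
  have ht0 : (0:ℝ) < t := ht.1
  have htne : t ≠ 0 := ne_of_gt ht0
  set U : ℝ × EuclideanSpace ℝ (Fin n) → ℝ := fun p => u p.1 p.2 with hUdef
  have hU : ContDiff ℝ (⊤ : ℕ∞) U := hsmooth
  have hUne : ∀ p, U p ≠ 0 := fun p => ne_of_gt (hpos p.1 p.2)
  have hUd : Differentiable ℝ U := hU.differentiable (by simp)
  have hdU1 : ∀ v, Differentiable ℝ (dd v U) := fun v => (dd_smooth hU v).differentiable (by simp)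
  set F : ℝ × EuclideanSpace ℝ (Fin n) → ℝ := fun p => -Real.log (U p) with hFdef
  have hF : ContDiff ℝ (⊤ : ℕ∞) F := (hU.log hUne).neg
  have hFd : Differentiable ℝ F := hF.differentiable (by simp)
  have hc1 : ∀ v, ContDiff ℝ (⊤ : ℕ∞) (dd v F) := fun v => dd_smooth hF v
  have hd1 : ∀ v, Differentiable ℝ (dd v F) := fun v => (hc1 v).differentiable (by simp)
  have hc2 : ∀ v w, ContDiff ℝ (⊤ : ℕ∞) (dd v (dd w F)) := fun v w => dd_smooth (hc1 w) v
  have hd2 : ∀ v w, Differentiable ℝ (dd v (dd w F)) :=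
    fun v w => (hc2 v w).differentiable (by simp)
  have hc3 : ∀ v w z, ContDiff ℝ (⊤ : ℕ∞) (dd v (dd w (dd z F))) :=
    fun v w z => dd_smooth (hc2 w z) v
  have hd3 : ∀ v w z, Differentiable ℝ (dd v (dd w (dd z F))) :=
    fun v w z => (hc3 v w z).differentiable (by simp)
  set S : Set (ℝ × EuclideanSpace ℝ (Fin n)) :=
    Ioo (0:ℝ) T ×ˢ (univ : Set (EuclideanSpace ℝ (Fin n))) with hSdef
  have hSopen : IsOpen S := isOpen_Ioo.prod isOpen_univ
  have htx : ((t, x) : ℝ × EuclideanSpace ℝ (Fin n)) ∈ S := by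
    rw [hSdef]; exact ⟨ht, mem_univ x⟩
  -- first derivatives of F in terms of U
  have hFU : ∀ (v : ℝ × EuclideanSpace ℝ (Fin n)) p, dd v F p = -(dd v U p / U p) := by
    intro v p
    rw [hFdef, dd_neg, dd_log hUd hUne]
  have hFU2 : ∀ (v w : ℝ × EuclideanSpace ℝ (Fin n)) p, dd v (dd w F) p
      = -((dd v (dd w U) p * U p - dd w U p * dd v U p) / U p ^ 2) := by
    intro v w p
    have hfun : dd w F = fun q => -(dd w U q / U q) := funext fun q => hFU w q
    rw [hfun, dd_neg, dd_div (hdU1 w) hUd hUne]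
  -- the heat equation for F
  have hheatF : ∀ p ∈ S, dd v0 F p
      = (∑ i, dd (vi i) (dd (vi i) F) p) - ∑ i, (dd (vi i) F p) ^ 2 := by
    rintro ⟨s, y⟩ hsy
    have hs : s ∈ Ioo (0:ℝ) T := by
      rw [hSdef] at hsy; exact hsy.1
    have hUt : dd v0 U (s, y) = ∑ i, dd (vi i) (dd (vi i) U) (s, y) := by
      rw [← deriv_slice hU s y]
      have e1 : (fun s' : ℝ => U (s', y)) = fun s' => u s' y := by rw [hUdef]
      have e2 : u s = fun y' => U (s, y') := by rw [hUdef]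
      rw [e1, hheat s hs y, e2, lap_slice hU s y]
    have hterm : ∀ i : Fin n,
        dd (vi i) (dd (vi i) F) (s, y) - (dd (vi i) F (s, y)) ^ 2
        = -(dd (vi i) (dd (vi i) U) (s, y) / U (s, y)) := by
      intro i
      rw [hFU2, hFU]
      have h0 := hUne (s, y)
      field_simp
      ring
    rw [hFU v0 (s, y), hUt, ← Finset.sum_sub_distrib,
      Finset.sum_congr rfl fun i _ => hterm i, Finset.sum_div]
    exact (Finset.sum_neg_distrib _).symm
  -- the function G = Δf - |∇f|²  (which equals ∂ₜ f on S)
  set G : ℝ × EuclideanSpace ℝ (Fin n) → ℝ :=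
    fun p => (∑ j, dd (vi j) (dd (vi j) F) p) - ∑ j, (dd (vi j) F p) ^ 2 with hGdef
  have hG1 : Differentiable ℝ
      (fun p : ℝ × EuclideanSpace ℝ (Fin n) => ∑ j, dd (vi j) (dd (vi j) F) p) :=
    (ContDiff.sum fun j _ => hc2 (vi j) (vi j)).differentiable (by simp)
  have hG2 : Differentiable ℝ
      (fun p : ℝ × EuclideanSpace ℝ (Fin n) => ∑ j, (dd (vi j) F p) ^ 2) :=
    (ContDiff.sum fun j _ => (hc1 (vi j)).pow 2).differentiable (by simp)
  have hGder : ∀ (w : ℝ × EuclideanSpace ℝ (Fin n)) p, dd w G p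
      = (∑ j, dd w (dd (vi j) (dd (vi j) F)) p)
        - ∑ j, 2 * dd (vi j) F p * dd w (dd (vi j) F) p := by
    intro w p
    rw [hGdef, dd_sub hG1 hG2 w p, dd_sum _ (fun j => hd2 (vi j) (vi j)) w p,
      dd_sum _ (fun j => ((hc1 (vi j)).pow 2).differentiable (by simp)) w p]
    congr 1
    exact Finset.sum_congr rfl fun j _ => dd_sq (hd1 (vi j)) w p
  have hGeq : ∀ p ∈ S, dd v0 F p = G p := fun p hp => hheatF p hp
  -- product expansion helper
  have hprod_exp : ∀ (v : ℝ × EuclideanSpace ℝ (Fin n)) (j : Fin n)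
      (g : ℝ × EuclideanSpace ℝ (Fin n) → ℝ), Differentiable ℝ g → ∀ p,
      dd v (fun q => 2 * dd (vi j) F q * g q) p
        = 2 * (dd v (dd (vi j) F) p * g p + dd (vi j) F p * dd v g p) := by
    intro v j g hg p
    have e : (fun q => 2 * dd (vi j) F q * g q) = fun q => 2 * (dd (vi j) F q * g q) := by
      funext q; ring
    rw [e, dd_const_mul ((hd1 (vi j)).fun_mul hg) 2, dd_mul (hd1 (vi j)) hg]
  -- time derivative of ∇f
  have h1 : ∀ i : Fin n, dd v0 (dd (vi i) F) (t, x)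
      = (∑ j, dd (vi i) (dd (vi j) (dd (vi j) F)) (t, x))
        - ∑ j, 2 * dd (vi j) F (t, x) * dd (vi i) (dd (vi j) F) (t, x) := by
    intro i
    rw [dd_comm hF v0 (vi i) (t, x), dd_congr_open hSopen hGeq htx (vi i), hGder (vi i) (t, x)]
  -- time derivative of Δf (coordinatewise)
  have hGeq2 : ∀ i : Fin n, ∀ p ∈ S, dd (vi i) (dd v0 F) p = dd (vi i) G p :=
    fun i p hp => dd_congr_open hSopen hGeq hp (vi i)
  have h2 : ∀ i : Fin n, dd v0 (dd (vi i) (dd (vi i) F)) (t, x)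
      = (∑ j, dd (vi i) (dd (vi i) (dd (vi j) (dd (vi j) F))) (t, x))
        - ∑ j, (2 * (dd (vi i) (dd (vi j) F) (t, x)) ^ 2
            + 2 * dd (vi j) F (t, x) * dd (vi i) (dd (vi i) (dd (vi j) F)) (t, x)) := by
    intro i
    have e1 : dd v0 (dd (vi i) (dd (vi i) F)) (t, x)
        = dd (vi i) (dd v0 (dd (vi i) F)) (t, x) := dd_comm (hc1 (vi i)) v0 (vi i) (t, x)
    have e2 : dd v0 (dd (vi i) F) = dd (vi i) (dd v0 F) :=
      funext fun p => dd_comm hF v0 (vi i) p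
    have e3 : dd (vi i) (dd (vi i) (dd v0 F)) (t, x) = dd (vi i) (dd (vi i) G) (t, x) :=
      dd_congr_open hSopen (hGeq2 i) htx (vi i)
    have e4 : dd (vi i) G = fun p =>
        (∑ j, dd (vi i) (dd (vi j) (dd (vi j) F)) p)
          - ∑ j, 2 * dd (vi j) F p * dd (vi i) (dd (vi j) F) p :=
      funext fun p => hGder (vi i) p
    rw [e1, e2, e3, e4]
    have hs1 : Differentiable ℝ (fun p : ℝ × EuclideanSpace ℝ (Fin n) =>
        ∑ j, dd (vi i) (dd (vi j) (dd (vi j) F)) p) :=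
      (ContDiff.sum fun j _ => hc3 (vi i) (vi j) (vi j)).differentiable (by simp)
    have hs2 : Differentiable ℝ (fun p : ℝ × EuclideanSpace ℝ (Fin n) =>
        ∑ j, 2 * dd (vi j) F p * dd (vi i) (dd (vi j) F) p) :=
      (ContDiff.sum fun j _ =>
        ((contDiff_const.mul (hc1 (vi j))).mul (hc2 (vi i) (vi j)))).differentiable (by simp)
    rw [dd_sub hs1 hs2, dd_sum _ (fun j => hd3 (vi i) (vi j) (vi j)),
      dd_sum _ (fun j => ((hd1 (vi j)).const_mul 2).fun_mul (hd2 (vi i) (vi j)))]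
    congr 1
    refine Finset.sum_congr rfl fun j _ => ?_
    rw [hprod_exp (vi i) j _ (hd2 (vi i) (vi j)) (t, x)]
    ring
  -- symmetry of third derivatives
  have hcsym : ∀ i j : Fin n, dd (vi i) (dd (vi j) (dd (vi j) F)) (t, x)
      = dd (vi j) (dd (vi j) (dd (vi i) F)) (t, x) := by
    intro i j
    have e1 := dd_comm (hc1 (vi j)) (vi i) (vi j) (t, x)
    have e2 : dd (vi i) (dd (vi j) F) = dd (vi j) (dd (vi i) F) :=
      funext fun p => dd_comm hF (vi i) (vi j) p
    rw [e1, e2]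
  -- time-derivative function rewritten through F
  have hwfun : (fun s =>
          s * (2 * lap (fun y => -Real.log (u s y)) x
                - gradsq (fun y => -Real.log (u s y)) x)
            + (-Real.log (u s x) - (n / 2) * Real.log (4 * Real.pi * s)) - n)
      = fun s : ℝ => s * (2 * ∑ i, dd (vi i) (dd (vi i) F) (s, x)
          - ∑ i, (dd (vi i) F (s, x)) ^ 2)
        + (F (s, x) - ((n : ℝ) / 2) * Real.log (4 * Real.pi * s)) - (n : ℝ) := by
    funext s
    have e1 : (fun y => -Real.log (u s y))
        = fun y : EuclideanSpace ℝ (Fin n) => F (s, y) := by rw [hFdef, hUdef]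
    have e2 : -Real.log (u s x) = F (s, x) := by rw [hFdef, hUdef]
    rw [e1, e2, lap_slice hF s x, gradsq_slice hF s x]
  have hπt : (4 : ℝ) * Real.pi * t ≠ 0 := by positivity
  have hW : HasDerivAt (fun s : ℝ => 2 * ∑ i, dd (vi i) (dd (vi i) F) (s, x)
      - ∑ i, (dd (vi i) F (s, x)) ^ 2)
      (2 * ∑ i, dd v0 (dd (vi i) (dd (vi i) F)) (t, x)
        - ∑ i, 2 * dd (vi i) F (t, x) * dd v0 (dd (vi i) F) (t, x)) t := by
    apply HasDerivAt.sub
    · exact (HasDerivAt.fun_sum fun i _ => hasDerivAt_slice (hc2 (vi i) (vi i)) x t).const_mul 2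
    · exact HasDerivAt.fun_sum fun i _ => by
        simpa using (hasDerivAt_slice (hc1 (vi i)) x t).fun_pow 2
  have hlog : HasDerivAt (fun s : ℝ => Real.log (4 * Real.pi * s))
      (4 * Real.pi / (4 * Real.pi * t)) t := by
    have h1 : HasDerivAt (fun s : ℝ => 4 * Real.pi * s) (4 * Real.pi) t := by
      simpa using (hasDerivAt_id t).const_mul (4 * Real.pi)
    exact h1.log hπt
  have hDF : HasDerivAt (fun s : ℝ => F (s, x)) (dd v0 F (t, x)) t := hasDerivAt_slice hF x t
  have hD : HasDerivAt (fun s : ℝ => s * (2 * ∑ i, dd (vi i) (dd (vi i) F) (s, x)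
          - ∑ i, (dd (vi i) F (s, x)) ^ 2)
        + (F (s, x) - ((n : ℝ) / 2) * Real.log (4 * Real.pi * s)) - (n : ℝ))
      (1 * (2 * ∑ i, dd (vi i) (dd (vi i) F) (t, x) - ∑ i, (dd (vi i) F (t, x)) ^ 2)
        + t * (2 * ∑ i, dd v0 (dd (vi i) (dd (vi i) F)) (t, x)
            - ∑ i, 2 * dd (vi i) F (t, x) * dd v0 (dd (vi i) F) (t, x))
        + (dd v0 F (t, x) - ((n : ℝ) / 2) * (4 * Real.pi / (4 * Real.pi * t))) - 0) t :=
    (((hasDerivAt_id t).mul hW).add (hDF.sub (hlog.const_mul ((n : ℝ) / 2)))).sub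
      (hasDerivAt_const t (n : ℝ))
  have hπ2 : (4 : ℝ) * Real.pi / (4 * Real.pi * t) = 1 / t := by
    rw [div_eq_div_iff hπt htne]
    ring
  -- the spatial function H
  set H : ℝ × EuclideanSpace ℝ (Fin n) → ℝ := fun p =>
    t * (2 * ∑ j, dd (vi j) (dd (vi j) F) p - ∑ j, (dd (vi j) F p) ^ 2)
      + (F p - ((n : ℝ) / 2) * Real.log (4 * Real.pi * t)) - (n : ℝ) with hHdef
  have hHc : ContDiff ℝ (⊤ : ℕ∞) H := by
    rw [hHdef]
    exact ((contDiff_const.mul ((contDiff_const.mul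
          (ContDiff.sum fun j _ => hc2 (vi j) (vi j))).sub
        (ContDiff.sum fun j _ => (hc1 (vi j)).pow 2))).add
      (hF.sub contDiff_const)).sub contDiff_const
  have hyfun : (fun y =>
            t * (2 * lap (fun z => -Real.log (u t z)) y
                  - gradsq (fun z => -Real.log (u t z)) y)
              + (-Real.log (u t y) - (n / 2) * Real.log (4 * Real.pi * t)) - n)
      = fun y => H (t, y) := by
    funext y
    have e1 : (fun z => -Real.log (u t z))
        = fun z : EuclideanSpace ℝ (Fin n) => F (t, z) := by rw [hFdef, hUdef]
    have e2 : -Real.log (u t y) = F (t, y) := by rw [hFdef, hUdef]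
    rw [hHdef, e1, e2, lap_slice hF t y, gradsq_slice hF t y]
  have hHder : ∀ i : Fin n, dd (vi i) H = fun p =>
      t * (2 * ∑ j, dd (vi i) (dd (vi j) (dd (vi j) F)) p
        - ∑ j, 2 * dd (vi j) F p * dd (vi i) (dd (vi j) F) p) + dd (vi i) F p := by
    intro i
    funext p
    rw [hHdef]
    have hin : Differentiable ℝ (fun p : ℝ × EuclideanSpace ℝ (Fin n) =>
        2 * ∑ j, dd (vi j) (dd (vi j) F) p - ∑ j, (dd (vi j) F p) ^ 2) :=
      ((contDiff_const.mul (ContDiff.sum fun j _ => hc2 (vi j) (vi j))).sub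
        (ContDiff.sum fun j _ => (hc1 (vi j)).pow 2)).differentiable (by simp)
    have h2G : Differentiable ℝ (fun p : ℝ × EuclideanSpace ℝ (Fin n) =>
        2 * ∑ j, dd (vi j) (dd (vi j) F) p) :=
      (contDiff_const.mul (ContDiff.sum fun j _ => hc2 (vi j) (vi j))).differentiable (by simp)
    rw [dd_sub (((differentiable_const t).fun_mul hin).fun_add
        (hFd.fun_sub (differentiable_const _))) (differentiable_const _),
      dd_add ((differentiable_const t).fun_mul hin) (hFd.fun_sub (differentiable_const _)),
      dd_const_mul hin t, dd_sub h2G hG2, dd_const_mul hG1 2,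
      dd_sum _ (fun j => hd2 (vi j) (vi j)),
      dd_sum _ (fun j => ((hc1 (vi j)).pow 2).differentiable (by simp)),
      dd_sub hFd (differentiable_const _), dd_const, dd_const]
    rw [Finset.sum_congr rfl fun j _ => dd_sq (hd1 (vi j)) (vi i) p]
    ring
  have hHlap : ∀ i : Fin n, dd (vi i) (dd (vi i) H) (t, x)
      = t * (2 * (∑ j, dd (vi i) (dd (vi i) (dd (vi j) (dd (vi j) F))) (t, x))
          - ∑ j, 2 * ((dd (vi i) (dd (vi j) F) (t, x)) ^ 2
              + dd (vi j) F (t, x) * dd (vi i) (dd (vi i) (dd (vi j) F)) (t, x)))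
        + dd (vi i) (dd (vi i) F) (t, x) := by
    intro i
    rw [hHder i]
    have hs1 : Differentiable ℝ (fun p : ℝ × EuclideanSpace ℝ (Fin n) =>
        ∑ j, dd (vi i) (dd (vi j) (dd (vi j) F)) p) :=
      (ContDiff.sum fun j _ => hc3 (vi i) (vi j) (vi j)).differentiable (by simp)
    have hs2 : Differentiable ℝ (fun p : ℝ × EuclideanSpace ℝ (Fin n) =>
        ∑ j, 2 * dd (vi j) F p * dd (vi i) (dd (vi j) F) p) :=
      (ContDiff.sum fun j _ =>
        ((contDiff_const.mul (hc1 (vi j))).mul (hc2 (vi i) (vi j)))).differentiable (by simp)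
    have hin : Differentiable ℝ (fun p : ℝ × EuclideanSpace ℝ (Fin n) =>
        2 * ∑ j, dd (vi i) (dd (vi j) (dd (vi j) F)) p
          - ∑ j, 2 * dd (vi j) F p * dd (vi i) (dd (vi j) F) p) :=
      ((differentiable_const 2).mul hs1).sub hs2
    rw [dd_add ((differentiable_const t).fun_mul hin) (hd1 (vi i)), dd_const_mul hin t,
      dd_sub ((differentiable_const 2).fun_mul hs1) hs2, dd_const_mul hs1 2,
      dd_sum _ (fun j => hd3 (vi i) (vi j) (vi j)),
      dd_sum _ (fun j => (((hd1 (vi j)).const_mul 2).fun_mul (hd2 (vi i) (vi j))))]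
    have hterm : ∀ j : Fin n,
        dd (vi i) (fun q => 2 * dd (vi j) F q * dd (vi i) (dd (vi j) F) q) (t, x)
        = 2 * ((dd (vi i) (dd (vi j) F) (t, x)) ^ 2
            + dd (vi j) F (t, x) * dd (vi i) (dd (vi i) (dd (vi j) F)) (t, x)) := by
      intro j
      rw [hprod_exp (vi i) j _ (hd2 (vi i) (vi j)) (t, x)]
      ring
    rw [Finset.sum_congr rfl fun j _ => hterm j]
  -- rewrite the right-hand side quantities
  have efbar : (fun y => -Real.log (u t y))
      = fun y : EuclideanSpace ℝ (Fin n) => F (t, y) := by rw [hFdef, hUdef]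
  have hhess_eq : hessShiftSq (fun y : EuclideanSpace ℝ (Fin n) => F (t, y)) t x
      = ∑ i, ∑ j, (dd (vi i) (dd (vi j) F) (t, x)
          - (if i = j then 1 / (2 * t) else 0)) ^ 2 := by
    unfold hessShiftSq
    refine Finset.sum_congr rfl fun i _ => Finset.sum_congr rfl fun j _ => ?_
    have e2 : pd (fun y : EuclideanSpace ℝ (Fin n) => F (t, y)) j
        = fun x' => dd (vi j) F (t, x') := funext fun x' => pd_slice hF t j x'
    rw [e2, pd_slice (hc1 (vi j)) t i x]
  have hpdH : ∀ i : Fin n, pd (fun y : EuclideanSpace ℝ (Fin n) => H (t, y)) i x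
      = t * (2 * ∑ j, dd (vi i) (dd (vi j) (dd (vi j) F)) (t, x)
          - ∑ j, 2 * dd (vi j) F (t, x) * dd (vi i) (dd (vi j) F) (t, x))
        + dd (vi i) F (t, x) := by
    intro i
    rw [pd_slice hHc t i x, hHder i]
  have hgi_eq : gradInner (fun y : EuclideanSpace ℝ (Fin n) => H (t, y))
      (fun y : EuclideanSpace ℝ (Fin n) => F (t, y)) x
      = ∑ i, (t * (2 * ∑ j, dd (vi i) (dd (vi j) (dd (vi j) F)) (t, x)
          - ∑ j, 2 * dd (vi j) F (t, x) * dd (vi i) (dd (vi j) F) (t, x))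
          + dd (vi i) F (t, x)) * dd (vi i) F (t, x) := by
    unfold gradInner
    exact Finset.sum_congr rfl fun i _ => by rw [hpdH i, pd_slice hF t i x]
  -- put everything together
  have e_hHlap : (∑ i, dd (vi i) (dd (vi i) H) (t, x))
      = ∑ i, (t * (2 * (∑ j, dd (vi i) (dd (vi i) (dd (vi j) (dd (vi j) F))) (t, x))
          - ∑ j, 2 * ((dd (vi i) (dd (vi j) F) (t, x)) ^ 2
              + dd (vi j) F (t, x) * dd (vi i) (dd (vi i) (dd (vi j) F)) (t, x)))
        + dd (vi i) (dd (vi i) F) (t, x)) :=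
    Finset.sum_congr rfl fun i _ => hHlap i
  have e_h2 : (∑ i, dd v0 (dd (vi i) (dd (vi i) F)) (t, x))
      = ∑ i, ((∑ j, dd (vi i) (dd (vi i) (dd (vi j) (dd (vi j) F))) (t, x))
        - ∑ j, (2 * (dd (vi i) (dd (vi j) F) (t, x)) ^ 2
            + 2 * dd (vi j) F (t, x) * dd (vi i) (dd (vi i) (dd (vi j) F)) (t, x))) :=
    Finset.sum_congr rfl fun i _ => h2 i
  have e_h1 : (∑ i, 2 * dd (vi i) F (t, x) * dd v0 (dd (vi i) F) (t, x))
      = ∑ i, 2 * dd (vi i) F (t, x) * ((∑ j, dd (vi i) (dd (vi j) (dd (vi j) F)) (t, x))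
          - ∑ j, 2 * dd (vi j) F (t, x) * dd (vi i) (dd (vi j) F) (t, x)) :=
    Finset.sum_congr rfl fun i _ => by rw [h1 i]
  rw [hwfun, hyfun, efbar]
  rw [hD.deriv, lap_slice hHc t x, hhess_eq, hgi_eq]
  rw [e_hHlap, e_h2, e_h1]
  rw [hheatF (t, x) htx]
  rw [hπ2, one_mul, sub_zero]
  exact final_algebra t htne (fun i => dd (vi i) F (t, x))
    (fun i j => dd (vi i) (dd (vi j) F) (t, x))
    (fun i j k => dd (vi i) (dd (vi j) (dd (vi k) F)) (t, x))
    (fun i j => dd (vi i) (dd (vi i) (dd (vi j) (dd (vi j) F))) (t, x)) hcsym
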